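/- In the task set of Example 1, the minimal number of linear policies of the form π(s) = A·s (A ∈ ℝ) needed so that every one of the four target functions f₁(s) = −s²+2s, f₂(s) = s², f₃(s) = −0.01s²+0.02s, f₄(s) = 0.01s² is approximated with expected uniform absolute error ≤ 1/4 on [0,1] is at least 2: no single linear function π(s) = A·s satisfies both ∫₀¹|A s − f₁(s)| ds ≤ 1/4 and ∫₀¹|A s − f₄(s)| ds ≤ 1/4. -/

import Mathlib

/-! Averaging over `[0,1]` gives `∫₀¹ |A s - f s| ds ≥ |A/2 - ∫₀¹ f|`. Since `∫₀¹ f₁ = 2/3` and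
`∫₀¹ f₄ = 1/300` differ by more than `1/2`, the number `A/2` cannot lie within `1/4` of both. -/

open intervalIntegral

theorem abs_integral_sub_integral_le_integral_abs_sub {f g : ℝ → ℝ} {a b : ℝ} (hab : a ≤ b)
    (hf : IntervalIntegrable f MeasureTheory.volume a b)
    (hg : IntervalIntegrable g MeasureTheory.volume a b) :
    |(∫ x in a..b, f x) - ∫ x in a..b, g x| ≤ ∫ x in a..b, |f x - g x| := by
  rw [← integral_sub hf hg]
  exact abs_integral_le_integral_abs hab

theorem abs_half_sub_integral_le_integral_abs_mul_sub {f : ℝ → ℝ}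
    (hf : IntervalIntegrable f MeasureTheory.volume 0 1) (A : ℝ) :
    |A / 2 - ∫ s in (0:ℝ)..1, f s| ≤ ∫ s in (0:ℝ)..1, |A * s - f s| := by
  have hπ : ∫ s in (0:ℝ)..1, A * s = A / 2 := by rw [integral_const_mul, integral_id]; ring
  rw [← hπ]
  exact abs_integral_sub_integral_le_integral_abs_sub zero_le_one
    ((continuous_const_mul A).intervalIntegrable 0 1) hf

theorem no_single_linear_policy :
    ∀ A : ℝ,
      ¬((∫ s in (0:ℝ)..1, |A*s - (-s^2 + 2*s)|) ≤ 1/4 ∧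
        (∫ s in (0:ℝ)..1, |A*s - 0.01*s^2|) ≤ 1/4) := by
  intro A ⟨h₁, h₄⟩
  have hf₁ : ∫ s in (0:ℝ)..1, (-s^2 + 2*s) = 2/3 := by
    rw [integral_add (by apply Continuous.intervalIntegrable; fun_prop)
      (by apply Continuous.intervalIntegrable; fun_prop),
      integral_neg, integral_pow, integral_const_mul, integral_id]
    norm_num
  have hf₄ : ∫ s in (0:ℝ)..1, 0.01*s^2 = 1/300 := by norm_num [integral_const_mul]
  have b₁ := (abs_half_sub_integral_le_integral_abs_mul_sub
    (by apply Continuous.intervalIntegrable; fun_prop) A).trans h₁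
  have b₄ := (abs_half_sub_integral_le_integral_abs_mul_sub
    (by apply Continuous.intervalIntegrable; fun_prop) A).trans h₄
  rw [hf₁] at b₁
  rw [hf₄] at b₄
  linarith [(abs_le.mp b₁).1, (abs_le.mp b₄).2]
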